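/- For the 8-class double-cover scheme Ã₀,…,Ã₈, the fusion B̃₀ = Ã₀, B̃₁ = Ã₁+Ã₂+Ã₃, B̃₂ = Ã₄+Ã₆, B̃₃ = Ã₅+Ã₇, B̃₄ = Ã₈ is again an association scheme (of class 4). -/

import Mathlib

/-!
Let `C` be the matrix of the relation "same parallel class" (`x.1 = y.1`), `J` the all-ones
matrix and `D = B₁ - B₂ = 2n (M - 1)`. The blocks `Gᵢ` are orthogonal and pairwise unbiased, so
`M = W Wᵀ` for the column `W` of the blocks `Gᵢ`, with `Wᵀ W = (m + 1) I`; whence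
`D² = 2n (m - 1) D + 4n²m I`. Since `B₁`, `B₂` are disjoint 0/1 matrices, `B₁ + B₂` is the
entrywise square of `D`, which is `J - C`.

Every fused matrix is a double cover `[[X, Y], [Y, X]]`, and these multiply like elements of the
group algebra of `ℤ/2`: `X + Y` and `X - Y` are multiplicative in the cover. Along the five fused
matrices `X + Y` runs through `span {I, C, J}` and `X - Y` through `span {I, D}`, two subspaces
closed under multiplication; hence so is the span of the fused matrices.
-/

open Matrix BigOperators

/-- A matrix has all entries ±1. -/
def signMatrix {α : Type*} (H : Matrix α α ℝ) : Prop :=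
  ∀ p q, H p q = 1 ∨ H p q = -1

/-- Bush-type condition: diagonal `2n`-blocks are all-ones, off-diagonal blocks
have zero row and column sums. -/
def isBushType (n : ℕ)
    (H : Matrix (Fin (2*n) × Fin (2*n)) (Fin (2*n) × Fin (2*n)) ℝ) : Prop :=
  (∀ i a b, H (i, a) (i, b) = 1) ∧
  (∀ i j, i ≠ j →
    (∀ a, ∑ b, H (i, a) (j, b) = 0) ∧ (∀ b, ∑ a, H (i, a) (j, b) = 0))

open scoped Kronecker

section AllOnes

variable {R ι : Type*}

def allOnes (ι : Type*) [One R] : Matrix ι ι R := of fun _ _ => 1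

@[simp] lemma allOnes_apply [One R] (x y : ι) : (allOnes ι : Matrix ι ι R) x y = 1 := rfl

lemma transpose_allOnes [One R] : (allOnes ι : Matrix ι ι R)ᵀ = allOnes ι := rfl

lemma allOnes_mul_allOnes [Fintype ι] [Semiring R] :
    (allOnes ι : Matrix ι ι R) * allOnes ι = (Fintype.card ι : R) • allOnes ι := by
  ext x y; simp [mul_apply]

lemma allOnes_kronecker_allOnes {κ : Type*} [MulOneClass R] :
    allOnes κ ⊗ₖ allOnes ι = (allOnes (κ × ι) : Matrix _ _ R) := by
  ext x y; simp

lemma transpose_one_kronecker_allOnes {κ : Type*} [CommMonoidWithZero R] [DecidableEq κ] :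
    ((1 : Matrix κ κ R) ⊗ₖ allOnes ι)ᵀ = 1 ⊗ₖ allOnes ι := by
  rw [← kroneckerMap_transpose, transpose_one, transpose_allOnes]

end AllOnes

section DoubleCover

variable {R ι : Type*}

def doubleCover (X Y : Matrix ι ι R) : Matrix (Fin 2 × ι) (Fin 2 × ι) R :=
  of fun a b => if a.1 = b.1 then X a.2 b.2 else Y a.2 b.2

@[simp] lemma doubleCover_apply (X Y : Matrix ι ι R) (e f : Fin 2) (x y : ι) :
    doubleCover X Y (e, x) (f, y) = if e = f then X x y else Y x y := rfl

lemma doubleCover_add [Add R] (X Y X' Y' : Matrix ι ι R) :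
    doubleCover X Y + doubleCover X' Y' = doubleCover (X + X') (Y + Y') := by
  ext ⟨e, x⟩ ⟨f, y⟩; by_cases h : e = f <;> simp [h]

lemma doubleCover_sub [Sub R] (X Y X' Y' : Matrix ι ι R) :
    doubleCover X Y - doubleCover X' Y' = doubleCover (X - X') (Y - Y') := by
  ext ⟨e, x⟩ ⟨f, y⟩; by_cases h : e = f <;> simp [h]

lemma doubleCover_smul {S : Type*} [SMul S R] (c : S) (X Y : Matrix ι ι R) :
    c • doubleCover X Y = doubleCover (c • X) (c • Y) := by
  ext ⟨e, x⟩ ⟨f, y⟩; by_cases h : e = f <;> simp [h]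

lemma doubleCover_zero [Zero R] : doubleCover (0 : Matrix ι ι R) 0 = 0 := by
  ext ⟨e, x⟩ ⟨f, y⟩; simp

lemma doubleCover_one_zero [Zero R] [One R] [DecidableEq ι] :
    doubleCover (1 : Matrix ι ι R) 0 = 1 := by
  ext ⟨e, x⟩ ⟨f, y⟩; by_cases h : e = f <;> simp [h, one_apply]

lemma doubleCover_allOnes [One R] :
    doubleCover (allOnes ι) (allOnes ι) = (allOnes (Fin 2 × ι) : Matrix _ _ R) := by
  ext ⟨e, x⟩ ⟨f, y⟩; simp

lemma transpose_doubleCover (X Y : Matrix ι ι R) :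
    (doubleCover X Y)ᵀ = doubleCover Xᵀ Yᵀ := by
  ext ⟨e, x⟩ ⟨f, y⟩; simp [eq_comm]

lemma doubleCover_mul [Fintype ι] [Semiring R] (X Y X' Y' : Matrix ι ι R) :
    doubleCover X Y * doubleCover X' Y' = doubleCover (X * X' + Y * Y') (X * Y' + Y * X') := by
  ext ⟨e, x⟩ ⟨f, y⟩
  rw [mul_apply, Fintype.sum_prod_type, Fin.sum_univ_two]
  fin_cases e <;> fin_cases f <;> simp [mul_apply, add_comm]

end DoubleCover

section Span

open Submodule

variable {K A : Type*} [CommSemiring K] [Semiring A] [Algebra K A]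

lemma span_mul_span_le_of_mul_mem {S : Set A} (hS : ∀ s ∈ S, ∀ t ∈ S, s * t ∈ span K S) :
    span K S * span K S ≤ span K S := by
  rw [span_mul_span, span_le]
  rintro _ ⟨s, hs, t, ht, rfl⟩
  exact hS s hs t ht

lemma span_pair_one_mul_le {D : A} (hD : D * D ∈ span K {1, D}) :
    span K {1, D} * span K {1, D} ≤ span K {1, D} := by
  apply span_mul_span_le_of_mul_mem
  simp only [Set.mem_insert_iff, Set.mem_singleton_iff, forall_eq_or_imp, forall_eq, one_mul,
    mul_one]
  exact ⟨⟨subset_span (by simp), subset_span (by simp)⟩, subset_span (by simp), hD⟩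

lemma exists_structureConstants {ι : Type*} [Fintype ι] (b : ι → A)
    (h : ∀ i j, b i * b j ∈ span K (Set.range b)) :
    ∃ c : ι → ι → ι → K, ∀ i j, b i * b j = ∑ k, c i j k • b k := by
  choose c hc using fun i j => (mem_span_range_iff_exists_fun K).1 (h i j)
  exact ⟨c, fun i j => (hc i j).symm⟩

end Span

section DoubleCoverSpan

open Submodule

variable {K ι : Type*} [Field K] {W : Submodule K (Matrix (Fin 2 × ι) (Fin 2 × ι) K)}

lemma doubleCover_smul_mem_of_mem_span (ε : K) {S : Set (Matrix ι ι K)}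
    (hS : ∀ s ∈ S, doubleCover s (ε • s) ∈ W) {u : Matrix ι ι K} (hu : u ∈ span K S) :
    doubleCover u (ε • u) ∈ W := by
  induction hu using span_induction with
  | mem x hx => exact hS x hx
  | zero => simp [doubleCover_zero]
  | add x y _ _ hx hy => rw [smul_add, ← doubleCover_add]; exact add_mem hx hy
  | smul a x _ hx => rw [smul_comm, ← doubleCover_smul]; exact W.smul_mem a hx

variable [CharZero K] {Uadd Usub : Submodule K (Matrix ι ι K)}

lemma doubleCover_mem_of_add_mem_of_sub_mem
    (hadd : ∀ u ∈ Uadd, doubleCover u u ∈ W) (hsub : ∀ v ∈ Usub, doubleCover v (-v) ∈ W)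
    {X Y : Matrix ι ι K} (hXY : X + Y ∈ Uadd) (hXY' : X - Y ∈ Usub) : doubleCover X Y ∈ W := by
  have h : doubleCover X Y =
      (2⁻¹ : K) • (doubleCover (X + Y) (X + Y) + doubleCover (X - Y) (-(X - Y))) := by
    rw [doubleCover_add, doubleCover_smul]
    congr 1 <;> module
  rw [h]
  exact W.smul_mem _ (add_mem (hadd _ hXY) (hsub _ hXY'))

lemma doubleCover_mul_mem [Fintype ι] [DecidableEq ι]
    (hadd : ∀ u ∈ Uadd, doubleCover u u ∈ W) (hsub : ∀ v ∈ Usub, doubleCover v (-v) ∈ W)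
    (hUadd : Uadd * Uadd ≤ Uadd) (hUsub : Usub * Usub ≤ Usub)
    {X Y X' Y' : Matrix ι ι K} (hXY : X + Y ∈ Uadd) (hXY' : X - Y ∈ Usub)
    (hXY₂ : X' + Y' ∈ Uadd) (hXY₂' : X' - Y' ∈ Usub) :
    doubleCover X Y * doubleCover X' Y' ∈ W := by
  rw [doubleCover_mul]
  apply doubleCover_mem_of_add_mem_of_sub_mem hadd hsub
  · have h : X * X' + Y * Y' + (X * Y' + Y * X') = (X + Y) * (X' + Y') := by noncomm_ring
    exact h ▸ hUadd (mul_mem_mul hXY hXY₂)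
  · have h : X * X' + Y * Y' - (X * Y' + Y * X') = (X - Y) * (X' - Y') := by noncomm_ring
    exact h ▸ hUsub (mul_mem_mul hXY' hXY₂')

end DoubleCoverSpan

section FusedCover

open Submodule

variable {K X : Type*} [Field K] [DecidableEq X]

/-- `fusedCover C B₁ B₂ k` is `B̃ₖ`, with `C - 1 = A₁ + A₂` and `B₁ = A₃ + A₄`. -/
def fusedCover (C B₁ B₂ : Matrix X X K) (k : Fin 5) : Matrix (Fin 2 × X) (Fin 2 × X) K :=
  doubleCover (![1, C - 1, B₁, B₂, 0] k) (![0, C - 1, B₂, B₁, 1] k)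

variable {C B₁ B₂ : Matrix X X K}

lemma fusedCover_zero : fusedCover C B₁ B₂ 0 = 1 := doubleCover_one_zero

lemma transpose_fusedCover (hC : Cᵀ = C) (hB₁ : B₁ᵀ = B₁) (hB₂ : B₂ᵀ = B₂) (k : Fin 5) :
    (fusedCover C B₁ B₂ k)ᵀ = fusedCover C B₁ B₂ k := by
  fin_cases k <;> simp [fusedCover, transpose_doubleCover, hC, hB₁, hB₂]

lemma sum_fusedCover (hsum : B₁ + B₂ = allOnes X - C) :
    ∑ k, fusedCover C B₁ B₂ k = allOnes (Fin 2 × X) := by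
  simp only [Fin.sum_univ_five, fusedCover, doubleCover_add]
  rw [← doubleCover_allOnes]
  congr 1
  all_goals
    calc _ = C + (B₁ + B₂) := by simp; abel
      _ = allOnes X := by rw [hsum]; abel

lemma fusedCover_mul_mem_span [CharZero K] [Fintype X]
    (hC : span K {1, C, allOnes X} * span K {1, C, allOnes X} ≤ span K {1, C, allOnes X})
    (hD : span K {1, B₁ - B₂} * span K {1, B₁ - B₂} ≤ span K {1, B₁ - B₂})
    (hsum : B₁ + B₂ = allOnes X - C) (i j : Fin 5) :
    fusedCover C B₁ B₂ i * fusedCover C B₁ B₂ j ∈ span K (Set.range (fusedCover C B₁ B₂)) := by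
  set f := fusedCover C B₁ B₂
  have hf : ∀ k, f k ∈ span K (Set.range f) := fun k => subset_span ⟨k, rfl⟩
  have hadd : ∀ u ∈ span K {1, C, allOnes X}, doubleCover u u ∈ span K (Set.range f) := by
    suffices hgen : ∀ s ∈ ({1, C, allOnes X} : Set _),
        doubleCover s ((1 : K) • s) ∈ span K (Set.range f) from
      fun u hu => by simpa using doubleCover_smul_mem_of_mem_span 1 hgen hu
    simp only [Set.mem_insert_iff, Set.mem_singleton_iff, forall_eq_or_imp, forall_eq, one_smul]
    refine ⟨?_, ?_, ?_⟩
    · have h : doubleCover 1 1 = f 0 + f 4 := by simp [f, fusedCover, doubleCover_add]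
      exact h ▸ add_mem (hf 0) (hf 4)
    · have h : doubleCover C C = f 0 + f 1 + f 4 := by simp [f, fusedCover, doubleCover_add]
      exact h ▸ add_mem (add_mem (hf 0) (hf 1)) (hf 4)
    · rw [doubleCover_allOnes, ← sum_fusedCover hsum]
      exact sum_mem fun k _ => hf k
  have hsub : ∀ v ∈ span K {1, B₁ - B₂}, doubleCover v (-v) ∈ span K (Set.range f) := by
    suffices hgen : ∀ s ∈ ({1, B₁ - B₂} : Set _),
        doubleCover s ((-1 : K) • s) ∈ span K (Set.range f) from
      fun v hv => by simpa using doubleCover_smul_mem_of_mem_span (-1) hgen hv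
    simp only [Set.mem_insert_iff, Set.mem_singleton_iff, forall_eq_or_imp, forall_eq, neg_one_smul]
    refine ⟨?_, ?_⟩
    · have h : doubleCover 1 (-1) = f 0 - f 4 := by simp [f, fusedCover, doubleCover_sub]
      exact h ▸ sub_mem (hf 0) (hf 4)
    · have h : doubleCover (B₁ - B₂) (-(B₁ - B₂)) = f 2 - f 3 := by
        simp [f, fusedCover, doubleCover_sub]
      exact h ▸ sub_mem (hf 2) (hf 3)
  have h1 : (1 : Matrix X X K) ∈ span K {1, C, allOnes X} := subset_span (by simp)
  have hC' : C ∈ span K {1, C, allOnes X} := subset_span (by simp)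
  have hJ : allOnes X ∈ span K {1, C, allOnes X} := subset_span (by simp)
  have h1' : (1 : Matrix X X K) ∈ span K {1, B₁ - B₂} := subset_span (by simp)
  have hD' : B₁ - B₂ ∈ span K {1, B₁ - B₂} := subset_span (by simp)
  have hmem : ∀ k, ![1, C - 1, B₁, B₂, 0] k + ![0, C - 1, B₂, B₁, 1] k ∈ span K {1, C, allOnes X} ∧
      ![1, C - 1, B₁, B₂, 0] k - ![0, C - 1, B₂, B₁, 1] k ∈ span K {1, B₁ - B₂} := by
    intro k
    fin_cases k
    · simpa using ⟨h1, h1'⟩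
    · simpa using add_mem (sub_mem hC' h1) (sub_mem hC' h1)
    · simpa [hsum] using ⟨sub_mem hJ hC', hD'⟩
    · simpa [add_comm B₂, hsum] using ⟨sub_mem hJ hC', neg_sub B₁ B₂ ▸ neg_mem hD'⟩
    · simpa using ⟨h1, h1'⟩
  exact doubleCover_mul_mem hadd hsub hC hD (hmem i).1 (hmem i).2 (hmem j).1 (hmem j).2

end FusedCover

section GroupDivisible

open Submodule

variable {K κ ι : Type*} [Field K] [Fintype κ] [Fintype ι] [DecidableEq κ] [DecidableEq ι]

lemma span_one_kronecker_allOnes_mul_le :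
    span K {1, 1 ⊗ₖ allOnes ι, allOnes (κ × ι)} * span K {1, 1 ⊗ₖ allOnes ι, allOnes (κ × ι)} ≤
      span K {1, (1 : Matrix κ κ K) ⊗ₖ allOnes ι, allOnes (κ × ι)} := by
  set C : Matrix (κ × ι) (κ × ι) K := 1 ⊗ₖ allOnes ι
  have hCC : C * C = (Fintype.card ι : K) • C := by
    rw [← mul_kronecker_mul, one_mul, allOnes_mul_allOnes, kronecker_smul]
  have hCJ : C * allOnes (κ × ι) = (Fintype.card ι : K) • allOnes (κ × ι) := by
    rw [← allOnes_kronecker_allOnes, ← mul_kronecker_mul, one_mul, allOnes_mul_allOnes,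
      kronecker_smul]
  have hJC : allOnes (κ × ι) * C = (Fintype.card ι : K) • allOnes (κ × ι) := by
    rw [← allOnes_kronecker_allOnes, ← mul_kronecker_mul, mul_one, allOnes_mul_allOnes,
      kronecker_smul]
  apply span_mul_span_le_of_mul_mem
  simp only [Set.mem_insert_iff, Set.mem_singleton_iff, forall_eq_or_imp, forall_eq]
  refine ⟨⟨?_, ?_, ?_⟩, ⟨?_, ?_, ?_⟩, ⟨?_, ?_, ?_⟩⟩ <;>
    simp only [one_mul, mul_one, hCC, hCJ, hJC, allOnes_mul_allOnes] <;>
    first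
      | exact smul_mem _ _ (subset_span (by simp))
      | exact subset_span (by simp)

end GroupDivisible

lemma sameBlockNe_add_diffBlock {R κ α β : Type*} [Ring R] [DecidableEq κ] [DecidableEq α]
    [DecidableEq β] :
    (of fun x y : κ × α × β => if x.1 = y.1 ∧ x.2.1 = y.2.1 ∧ x.2.2 ≠ y.2.2 then (1 : R) else 0) +
      of (fun x y : κ × α × β => if x.1 = y.1 ∧ x.2.1 ≠ y.2.1 then (1 : R) else 0) =
      1 ⊗ₖ allOnes (α × β) - 1 := by
  ext ⟨i, a, b⟩ ⟨j, a', b'⟩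
  by_cases hi : i = j <;> by_cases ha : a = a' <;> by_cases hb : b = b' <;>
    simp [hi, ha, hb, one_apply]

section Gram

open Submodule

variable {R ι κ : Type*}

def stackBlocks (G : κ → Matrix ι ι R) : Matrix (κ × ι) ι R := of fun x q => G x.1 x.2 q

variable [CommRing R] [Fintype ι]

lemma eq_stackBlocks_mul_transpose {G : κ → Matrix ι ι R} {M : Matrix (κ × ι) (κ × ι) R}
    (hM : ∀ i j p q, M (i, p) (j, q) = (G i * (G j)ᵀ) p q) :
    M = stackBlocks G * (stackBlocks G)ᵀ := by
  ext ⟨i, p⟩ ⟨j, q⟩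
  simp [hM, mul_apply, stackBlocks]

lemma transpose_stackBlocks_mul_self [Fintype κ] [DecidableEq ι] {G : κ → Matrix ι ι R}
    (hG : ∀ i, (G i)ᵀ * G i = 1) :
    (stackBlocks G)ᵀ * stackBlocks G = (Fintype.card κ : R) • 1 := by
  have h : (stackBlocks G)ᵀ * stackBlocks G = ∑ i, (G i)ᵀ * G i := by
    ext p q
    simp [mul_apply, stackBlocks, Fintype.sum_prod_type, Matrix.sum_apply]
  simp [h, hG, Nat.cast_smul_eq_nsmul]

lemma mul_transpose_mul_mul_transpose {m n : Type*} [Fintype m] [Fintype n] [DecidableEq n]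
    {W : Matrix m n R} {c : R} (hW : Wᵀ * W = c • 1) :
    W * Wᵀ * (W * Wᵀ) = c • (W * Wᵀ) := by
  rw [Matrix.mul_assoc, ← Matrix.mul_assoc Wᵀ, hW, smul_mul, Matrix.one_mul, Matrix.mul_smul]

lemma smul_sub_one_mul_self {n : Type*} [Fintype n] [DecidableEq n] {M : Matrix n n R}
    {c : R} (hM : M * M = c • M) (s : R) :
    s • (M - 1) * (s • (M - 1)) = (s * (c - 2)) • (s • (M - 1)) + (s ^ 2 * (c - 1)) • 1 := by
  have h : (M - 1) * (M - 1) = M * M - 2 • M + 1 := by noncomm_ring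
  rw [smul_mul_smul, h, hM]
  module

lemma span_pair_one_smul_sub_one_mul_le {n : Type*} [Fintype n] [DecidableEq n]
    {M : Matrix n n R} {c : R} (hM : M * M = c • M) (s : R) :
    span R {1, s • (M - 1)} * span R {1, s • (M - 1)} ≤ span R {1, s • (M - 1)} := by
  apply span_pair_one_mul_le
  rw [smul_sub_one_mul_self hM]
  exact add_mem (smul_mem _ _ (subset_span (by simp))) (smul_mem _ _ (subset_span (by simp)))

end Gram

lemma signMatrix.transpose {α : Type*} {L : Matrix α α ℝ} (hL : signMatrix L) :
    signMatrix Lᵀ := fun p q => hL q p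

lemma signMatrix.sq_apply {α : Type*} {L : Matrix α α ℝ} (hL : signMatrix L) (p q : α) :
    L p q ^ 2 = 1 := by
  rcases hL p q with h | h <;> simp [h]

section MutuallyUnbiased

variable {ι : Type*} [Fintype ι] [DecidableEq ι] {m : ℕ} {s : ℝ} {H : Fin m → Matrix ι ι ℝ}
  {G : Fin (m + 1) → Matrix ι ι ℝ}

lemma mul_transpose_self_eq_one (hs : s ≠ 0) (hHad : ∀ k, H k * (H k)ᵀ = s ^ 2 • 1)
    (hG0 : G 0 = 1) (hGs : ∀ k, G k.succ = s⁻¹ • H k) (i : Fin (m + 1)) : G i * (G i)ᵀ = 1 := by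
  cases i using Fin.cases with
  | zero => simp [hG0]
  | succ k =>
    rw [hGs, transpose_smul, smul_mul, Matrix.mul_smul, hHad, smul_smul, smul_smul,
      show s⁻¹ * s⁻¹ * s ^ 2 = 1 by field_simp, one_smul]

lemma exists_signMatrix_mul_transpose (hsign : ∀ k, signMatrix (H k))
    (hmub : ∀ k l, k ≠ l → ∃ L, signMatrix L ∧ H k * (H l)ᵀ = s • L)
    (hG0 : G 0 = 1) (hGs : ∀ k, G k.succ = s⁻¹ • H k) {i j : Fin (m + 1)} (hij : i ≠ j) :
    ∃ L, signMatrix L ∧ G i * (G j)ᵀ = s⁻¹ • L := by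
  cases i using Fin.cases with
  | zero =>
    cases j using Fin.cases with
    | zero => exact absurd rfl hij
    | succ l => exact ⟨(H l)ᵀ, (hsign l).transpose, by simp [hG0, hGs]⟩
  | succ k =>
    cases j using Fin.cases with
    | zero => exact ⟨H k, hsign k, by simp [hG0, hGs]⟩
    | succ l =>
      obtain ⟨L, hL, hkl⟩ := hmub k l (by simpa using hij)
      refine ⟨L, hL, ?_⟩
      rw [hGs, hGs, transpose_smul, smul_mul, Matrix.mul_smul, hkl, smul_smul, smul_smul]
      field_simp

end MutuallyUnbiased

lemma sq_smul_sub_one_apply {κ ι : Type*} [Fintype ι] [DecidableEq κ] [DecidableEq ι] {s : ℝ}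
    {G : κ → Matrix ι ι ℝ} {M : Matrix (κ × ι) (κ × ι) ℝ} (hs : s ≠ 0)
    (hM : ∀ i j p q, M (i, p) (j, q) = (G i * (G j)ᵀ) p q) (hGG : ∀ i, G i * (G i)ᵀ = 1)
    (hGoff : ∀ i j, i ≠ j → ∃ L, signMatrix L ∧ G i * (G j)ᵀ = s⁻¹ • L) (x y : κ × ι) :
    (s • (M - 1)) x y ^ 2 = if x.1 = y.1 then 0 else 1 := by
  obtain ⟨i, p⟩ := x
  obtain ⟨j, q⟩ := y
  by_cases hij : i = j
  · subst hij
    simp [hM, hGG, one_apply]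
  · obtain ⟨L, hL, hGL⟩ := hGoff i j hij
    simp [hM, hGL, hij, hs, hL.sq_apply]

lemma add_eq_sub_sq_of_zero_or_one {R : Type*} [CommRing R] {a b : R} (ha : a = 0 ∨ a = 1)
    (hb : b = 0 ∨ b = 1) (hab : a = 0 ∨ b = 0) : a + b = (a - b) ^ 2 := by
  rcases ha with rfl | rfl <;> rcases hb with rfl | rfl <;> rcases hab with h | h <;> simp [h]

lemma add_eq_allOnes_sub_one_kronecker {κ ι : Type*} [DecidableEq κ]
    {B₁ B₂ : Matrix (κ × ι) (κ × ι) ℝ}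
    (hB₁01 : ∀ x y, B₁ x y = 0 ∨ B₁ x y = 1) (hB₂01 : ∀ x y, B₂ x y = 0 ∨ B₂ x y = 1)
    (hdisj : ∀ x y, B₁ x y = 0 ∨ B₂ x y = 0)
    (hsq : ∀ x y, (B₁ - B₂) x y ^ 2 = if x.1 = y.1 then 0 else 1) :
    B₁ + B₂ = allOnes (κ × ι) - 1 ⊗ₖ allOnes ι := by
  ext x y
  rw [Matrix.add_apply, add_eq_sub_sq_of_zero_or_one (hB₁01 x y) (hB₂01 x y) (hdisj x y),
    ← Matrix.sub_apply, hsq]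
  by_cases h : x.1 = y.1 <;> simp [h, one_apply]

lemma transpose_eq_self_of_add_of_sub {K n : Type*} [Field K] [CharZero K] {A B : Matrix n n K}
    (hadd : (A + B)ᵀ = A + B) (hsub : (A - B)ᵀ = A - B) : Aᵀ = A ∧ Bᵀ = B := by
  have hA : A = (2⁻¹ : K) • ((A + B) + (A - B)) := by module
  have hB : B = (2⁻¹ : K) • ((A + B) - (A - B)) := by module
  constructor
  · rw [hA, transpose_smul, transpose_add, hadd, hsub]
  · rw [hB, transpose_smul, transpose_sub, hadd, hsub]

theorem mubh_fusion_four_class_general (n m : ℕ) (hn : 0 < n)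
    (H : Fin m → Matrix (Fin (2*n) × Fin (2*n)) (Fin (2*n) × Fin (2*n)) ℝ)
    (hsign : ∀ k, signMatrix (H k))
    (hHad : ∀ k, H k * (H k)ᵀ = ((4 * n ^ 2 : ℕ) : ℝ) • 1)
    (hmub : ∀ k l, k ≠ l → ∃ L, signMatrix L ∧ H k * (H l)ᵀ = (2 * (n : ℝ)) • L)
    (G : Fin (m+1) → Matrix (Fin (2*n) × Fin (2*n)) (Fin (2*n) × Fin (2*n)) ℝ)
    (hG0 : G 0 = 1)
    (hGs : ∀ k : Fin m, G k.succ = (2 * (n : ℝ))⁻¹ • H k)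
    (M : Matrix (Fin (m+1) × Fin (2*n) × Fin (2*n)) (Fin (m+1) × Fin (2*n) × Fin (2*n)) ℝ)
    (hM : ∀ i j p q, M (i, p) (j, q) = (G i * (G j)ᵀ) p q)
    (B₁ B₂ : Matrix (Fin (m+1) × Fin (2*n) × Fin (2*n)) (Fin (m+1) × Fin (2*n) × Fin (2*n)) ℝ)
    (hB₁01 : ∀ x y, B₁ x y = 0 ∨ B₁ x y = 1)
    (hB₂01 : ∀ x y, B₂ x y = 0 ∨ B₂ x y = 1)
    (hdisj : ∀ x y, B₁ x y = 0 ∨ B₂ x y = 0)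
    (hB : B₁ - B₂ = (2 * (n : ℝ)) • (M - 1))
    (A₀ A₁ A₂ A₃ A₄ A₅ : Matrix (Fin (m+1) × Fin (2*n) × Fin (2*n)) (Fin (m+1) × Fin (2*n) × Fin (2*n)) ℝ)
    (hA₀ : A₀ = 1)
    (hA₁ : A₁ = Matrix.of (fun x y : Fin (m+1) × Fin (2*n) × Fin (2*n) =>
      if x.1 = y.1 ∧ x.2.1 = y.2.1 ∧ x.2.2 ≠ y.2.2 then (1 : ℝ) else 0))
    (hA₂ : A₂ = Matrix.of (fun x y : Fin (m+1) × Fin (2*n) × Fin (2*n) =>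
      if x.1 = y.1 ∧ x.2.1 ≠ y.2.1 then (1 : ℝ) else 0))
    (hA₄ : A₄ = B₁ - A₃)
    (hA₅ : A₅ = B₂)
    (T : Fin 9 → Matrix (Fin 2 × Fin (m+1) × Fin (2*n) × Fin (2*n)) (Fin 2 × Fin (m+1) × Fin (2*n) × Fin (2*n)) ℝ)
    (hT0 : ∀ e f x y, T 0 (e, x) (f, y) = if e = f then A₀ x y else 0)
    (hT1 : ∀ e f x y, T 1 (e, x) (f, y) = if e = f then A₁ x y else 0)
    (hT2 : ∀ e f x y, T 2 (e, x) (f, y) = if e = f then 0 else A₁ x y)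
    (hT3 : ∀ e f x y, T 3 (e, x) (f, y) = A₂ x y)
    (hT4 : ∀ e f x y, T 4 (e, x) (f, y) = if e = f then A₃ x y else 0)
    (hT5 : ∀ e f x y, T 5 (e, x) (f, y) = if e = f then 0 else A₃ x y)
    (hT6 : ∀ e f x y, T 6 (e, x) (f, y) = if e = f then A₄ x y else A₅ x y)
    (hT7 : ∀ e f x y, T 7 (e, x) (f, y) = if e = f then A₅ x y else A₄ x y)
    (hT8 : ∀ e f x y, T 8 (e, x) (f, y) = if e = f then 0 else A₀ x y)
    (Bt : Fin 5 → Matrix (Fin 2 × Fin (m+1) × Fin (2*n) × Fin (2*n)) (Fin 2 × Fin (m+1) × Fin (2*n) × Fin (2*n)) ℝ)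
    (hBt0 : Bt 0 = T 0)
    (hBt1 : Bt 1 = T 1 + T 2 + T 3)
    (hBt2 : Bt 2 = T 4 + T 6)
    (hBt3 : Bt 3 = T 5 + T 7)
    (hBt4 : Bt 4 = T 8) :
    Bt 0 = 1 ∧
    (∀ i, (Bt i)ᵀ = Bt i) ∧
    (∑ i, Bt i = Matrix.of
      (fun _ _ : Fin 2 × Fin (m+1) × Fin (2*n) × Fin (2*n) => (1 : ℝ))) ∧
    (∃ c : Fin 5 → Fin 5 → Fin 5 → ℝ, ∀ i j,
      Bt i * Bt j = ∑ k, c i j k • Bt k) := by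
  set s : ℝ := 2 * n
  have hs : s ≠ 0 := by positivity
  have hHad' : ∀ k, H k * (H k)ᵀ = s ^ 2 • 1 := fun k => by
    rw [hHad, show ((4 * n ^ 2 : ℕ) : ℝ) = s ^ 2 by simp only [s]; push_cast; ring]
  have hGG := mul_transpose_self_eq_one hs hHad' hG0 hGs
  have hGoff : ∀ i j, i ≠ j → ∃ L, signMatrix L ∧ G i * (G j)ᵀ = s⁻¹ • L :=
    fun i j => exists_signMatrix_mul_transpose hsign hmub hG0 hGs
  have hMW := eq_stackBlocks_mul_transpose hM
  have hMM : M * M = (Fintype.card (Fin (m + 1)) : ℝ) • M := by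
    rw [hMW]
    exact mul_transpose_mul_mul_transpose
      (transpose_stackBlocks_mul_self fun i => mul_eq_one_comm.mp (hGG i))
  have hsum : B₁ + B₂ = allOnes _ - 1 ⊗ₖ allOnes _ :=
    add_eq_allOnes_sub_one_kronecker hB₁01 hB₂01 hdisj
      (hB ▸ sq_smul_sub_one_apply hs hM hGG hGoff)
  have hsymm := transpose_eq_self_of_add_of_sub
    (by rw [hsum, transpose_sub, transpose_allOnes, transpose_one_kronecker_allOnes])
    (by rw [hB, hMW]; simp [transpose_mul])
  have hA₁₂ : A₁ + A₂ = 1 ⊗ₖ allOnes _ - 1 := hA₁ ▸ hA₂ ▸ sameBlockNe_add_diffBlock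
  have hA₃₄ : A₃ + A₄ = B₁ := by rw [hA₄]; abel
  have hBt : Bt = fusedCover (1 ⊗ₖ allOnes _) B₁ B₂ := by
    funext k
    fin_cases k <;> ext ⟨e, x⟩ ⟨f, y⟩ <;> by_cases h : e = f <;>
      simp [h, fusedCover, hBt0, hBt1, hBt2, hBt3, hBt4, hT0, hT1, hT2, hT3, hT4, hT5, hT6, hT7,
        hT8, hA₀, hA₅, ← hA₁₂, ← hA₃₄]
  subst hBt
  exact ⟨fusedCover_zero, transpose_fusedCover transpose_one_kronecker_allOnes hsymm.1 hsymm.2,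
    sum_fusedCover hsum, exists_structureConstants _ (fusedCover_mul_mem_span
      span_one_kronecker_allOnes_mul_le (hB ▸ span_pair_one_smul_sub_one_mul_le hMM s) hsum)⟩

/-- The fusion `B̃₀ = Ã₀, B̃₁ = Ã₁+Ã₂+Ã₃, B̃₂ = Ã₄+Ã₆, B̃₃ = Ã₅+Ã₇, B̃₄ = Ã₈`
of the 8-class double-cover scheme is again an association scheme of class 4. -/
theorem mubh_fusion_four_class (n m : ℕ) (hn : 0 < n)
    (H : Fin m → Matrix (Fin (2*n) × Fin (2*n)) (Fin (2*n) × Fin (2*n)) ℝ)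
    (hsign : ∀ k, signMatrix (H k))
    (hHad : ∀ k, H k * (H k)ᵀ = ((4 * n ^ 2 : ℕ) : ℝ) • 1)
    (hBush : ∀ k, isBushType n (H k))
    (hmub : ∀ k l, k ≠ l → ∃ L, signMatrix L ∧ H k * (H l)ᵀ = (2 * (n : ℝ)) • L)
    (G : Fin (m+1) → Matrix (Fin (2*n) × Fin (2*n)) (Fin (2*n) × Fin (2*n)) ℝ)
    (hG0 : G 0 = 1)
    (hGs : ∀ k : Fin m, G k.succ = (2 * (n : ℝ))⁻¹ • H k)
    (M : Matrix (Fin (m+1) × Fin (2*n) × Fin (2*n)) (Fin (m+1) × Fin (2*n) × Fin (2*n)) ℝ)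
    (hM : ∀ i j p q, M (i, p) (j, q) = (G i * (G j)ᵀ) p q)
    (B₁ B₂ : Matrix (Fin (m+1) × Fin (2*n) × Fin (2*n)) (Fin (m+1) × Fin (2*n) × Fin (2*n)) ℝ)
    (hB₁01 : ∀ x y, B₁ x y = 0 ∨ B₁ x y = 1)
    (hB₂01 : ∀ x y, B₂ x y = 0 ∨ B₂ x y = 1)
    (hdisj : ∀ x y, B₁ x y = 0 ∨ B₂ x y = 0)
    (hB : B₁ - B₂ = (2 * (n : ℝ)) • (M - 1))
    (A₀ A₁ A₂ A₃ A₄ A₅ : Matrix (Fin (m+1) × Fin (2*n) × Fin (2*n)) (Fin (m+1) × Fin (2*n) × Fin (2*n)) ℝ)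
    (hA₀ : A₀ = 1)
    (hA₁ : A₁ = Matrix.of (fun x y : Fin (m+1) × Fin (2*n) × Fin (2*n) =>
      if x.1 = y.1 ∧ x.2.1 = y.2.1 ∧ x.2.2 ≠ y.2.2 then (1 : ℝ) else 0))
    (hA₂ : A₂ = Matrix.of (fun x y : Fin (m+1) × Fin (2*n) × Fin (2*n) =>
      if x.1 = y.1 ∧ x.2.1 ≠ y.2.1 then (1 : ℝ) else 0))
    (hA₃ : A₃ = Matrix.of (fun x y : Fin (m+1) × Fin (2*n) × Fin (2*n) =>
      if x.1 ≠ y.1 ∧ x.2.1 = y.2.1 then (1 : ℝ) else 0))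
    (hA₄ : A₄ = B₁ - A₃)
    (hA₅ : A₅ = B₂)
    (T : Fin 9 → Matrix (Fin 2 × Fin (m+1) × Fin (2*n) × Fin (2*n)) (Fin 2 × Fin (m+1) × Fin (2*n) × Fin (2*n)) ℝ)
    (hT0 : ∀ e f x y, T 0 (e, x) (f, y) = if e = f then A₀ x y else 0)
    (hT1 : ∀ e f x y, T 1 (e, x) (f, y) = if e = f then A₁ x y else 0)
    (hT2 : ∀ e f x y, T 2 (e, x) (f, y) = if e = f then 0 else A₁ x y)
    (hT3 : ∀ e f x y, T 3 (e, x) (f, y) = A₂ x y)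
    (hT4 : ∀ e f x y, T 4 (e, x) (f, y) = if e = f then A₃ x y else 0)
    (hT5 : ∀ e f x y, T 5 (e, x) (f, y) = if e = f then 0 else A₃ x y)
    (hT6 : ∀ e f x y, T 6 (e, x) (f, y) = if e = f then A₄ x y else A₅ x y)
    (hT7 : ∀ e f x y, T 7 (e, x) (f, y) = if e = f then A₅ x y else A₄ x y)
    (hT8 : ∀ e f x y, T 8 (e, x) (f, y) = if e = f then 0 else A₀ x y)
    (Bt : Fin 5 → Matrix (Fin 2 × Fin (m+1) × Fin (2*n) × Fin (2*n)) (Fin 2 × Fin (m+1) × Fin (2*n) × Fin (2*n)) ℝ)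
    (hBt0 : Bt 0 = T 0)
    (hBt1 : Bt 1 = T 1 + T 2 + T 3)
    (hBt2 : Bt 2 = T 4 + T 6)
    (hBt3 : Bt 3 = T 5 + T 7)
    (hBt4 : Bt 4 = T 8) :
    Bt 0 = 1 ∧
    (∀ i, (Bt i)ᵀ = Bt i) ∧
    (∑ i, Bt i = Matrix.of
      (fun _ _ : Fin 2 × Fin (m+1) × Fin (2*n) × Fin (2*n) => (1 : ℝ))) ∧
    (∃ c : Fin 5 → Fin 5 → Fin 5 → ℝ, ∀ i j,
      Bt i * Bt j = ∑ k, c i j k • Bt k) :=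
  mubh_fusion_four_class_general n m hn H hsign hHad hmub G hG0 hGs M hM B₁ B₂ hB₁01 hB₂01 hdisj hB
    A₀ A₁ A₂ A₃ A₄ A₅ hA₀ hA₁ hA₂ hA₄ hA₅ T hT0 hT1 hT2 hT3 hT4 hT5 hT6 hT7 hT8 Bt hBt0 hBt1 hBt2
    hBt3 hBt4
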